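/- Let a zero-mean nonsingular Gaussian sequence obey the $CM_L$ model $x_k = G_{k,k-1}x_{k-1} + G_{k,N}x_N + e_k$ ($k\in[1,N-1]$), $x_N = e_N$, $x_0 = G_{0,N}x_N + e_0$ with white Gaussian noise of positive definite covariances $G_k$. If the parameters satisfy $G_k^{-1} G_{k,N} = G_{k+1,k}' G_{k+1}^{-1} G_{k+1,N}$ for all $k \in [1,N-2]$ and additionally $G_0^{-1} G_{0,N} = G_{1,0}' G_1^{-1} G_{1,N}$, then the sequence is Markov. -/

import Mathlib

/-!
Write `a_0 = G_0⁻¹ G_{0,N}` and `a_k = G_k⁻¹ G_{k,N}`. Moving the `G_{k,N} x_N` part of the mean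
out of the Gaussian factor of `x_k` leaves `N(x_k; G_{k,k-1} x_{k-1}, G_k)`, a function of `x_N`,
and `exp((x_k - G_{k,k-1} x_{k-1})' a_k x_N)`; the hypotheses `G_{k,k-1}' a_k = a_{k-1}` turn this
exponent into `x_k' a_k x_N - x_{k-1}' a_{k-1} x_N`. These telescope to `x_{N-1}' a_{N-1} x_N`, so
the density has the Markov-chain form `ψ(x_0) ∏_k φ_k(x_k, x_{k+1})`. For every `j` such a density
is a function of `x_0, …, x_j` times a function of `x_j, …, x_N`, hence every marginal in the
Markov identity at `(j, k)` is a marginal of the first factor times one of the second, and the two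
sides agree.
-/

open MeasureTheory ProbabilityTheory Matrix

noncomputable def gaussianPDF {ι : Type*} [Fintype ι] [DecidableEq ι]
    (μ : ι → ℝ) (S : Matrix ι ι ℝ) (x : ι → ℝ) : ℝ :=
  (Real.sqrt ((2 * Real.pi) ^ (Fintype.card ι) * S.det))⁻¹ *
    Real.exp (-(1 / 2) * ((x - μ) ⬝ᵥ S⁻¹ *ᵥ (x - μ)))

/-- \$M_{N|k} = M_{N,N-1} ⋯ M_{k+1,k}\$ (with \$M_{N|N} = I\$), where \$F n = M_{n,n-1}\$. -/
noncomputable def Mtrans {d : ℕ} (F : ℕ → Matrix (Fin d) (Fin d) ℝ) (N k : ℕ) :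
    Matrix (Fin d) (Fin d) ℝ :=
  (((List.Ico (k + 1) (N + 1)).reverse).map F).prod

/-- \$C_{N|k} = ∑_{n=k}^{N-1} M_{N|n+1} M_{n+1} M_{N|n+1}^T\$. -/
noncomputable def Ctrans {d : ℕ} (F M : ℕ → Matrix (Fin d) (Fin d) ℝ) (N k : ℕ) :
    Matrix (Fin d) (Fin d) ℝ :=
  ∑ n ∈ Finset.Ico k N, Mtrans F N (n + 1) * M (n + 1) * (Mtrans F N (n + 1))ᵀ

noncomputable def marg {d N : ℕ} (p : (Fin (N + 1) → (Fin d → ℝ)) → ℝ)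
    (S : Finset (Fin (N + 1))) (x : Fin (N + 1) → (Fin d → ℝ)) : ℝ :=
  ∫ y : {i : Fin (N + 1) // i ∉ S} → (Fin d → ℝ),
    p (fun i => if h : i ∈ S then x i else y ⟨i, h⟩)

def IsMarkov {d N : ℕ} (p : (Fin (N + 1) → (Fin d → ℝ)) → ℝ) : Prop :=
  ∀ j k : Fin (N + 1), j < k → ∀ x,
    marg p (insert k (Finset.Iic j)) x * marg p {j} x
      = marg p {j, k} x * marg p (Finset.Iic j) x

def IsCML {d N : ℕ} (p : (Fin (N + 1) → (Fin d → ℝ)) → ℝ) : Prop :=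
  ∀ j k : Fin (N + 1), j < k → k < Fin.last N → ∀ x,
    marg p (insert k (insert (Fin.last N) (Finset.Iic j))) x * marg p {j, Fin.last N} x
      = marg p {j, k, Fin.last N} x * marg p (insert (Fin.last N) (Finset.Iic j)) x

/-- Joint density of the Gaussian Markov model \$x_0 = e_0\$, \$x_k = M_{k,k-1}x_{k-1} + e_k\$
with \$e_k ∼ N(0, M_k)\$ (where \$F k = M_{k,k-1}\$). -/
noncomputable def markovDensity {d N : ℕ} (F M : ℕ → Matrix (Fin d) (Fin d) ℝ)
    (x : Fin (N + 1) → (Fin d → ℝ)) : ℝ :=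
  gaussianPDF 0 (M 0) (x 0) *
    ∏ k : Fin N, gaussianPDF ((F (k.val + 1)) *ᵥ x k.castSucc) (M (k.val + 1)) (x k.succ)

/-- Joint density of the \$CM_L\$ model \$x_N = e_N\$, \$x_0 = G_{0,N}x_N + e_0\$,
\$x_k = G_{k,k-1}x_{k-1} + G_{k,N}x_N + e_k\$, with white Gaussian noise
\$e_N ∼ N(0, G_N)\$, \$e_0 ∼ N(0, G_0)\$, \$e_k ∼ N(0, G_k)\$. -/
noncomputable def cmlDensity {d N : ℕ} (G0N : Matrix (Fin d) (Fin d) ℝ)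
    (Gkk1 GkN : ℕ → Matrix (Fin d) (Fin d) ℝ)
    (Gc0 GcN : Matrix (Fin d) (Fin d) ℝ) (Gc : ℕ → Matrix (Fin d) (Fin d) ℝ)
    (x : Fin (N + 1) → (Fin d → ℝ)) : ℝ :=
  gaussianPDF 0 GcN (x (Fin.last N)) *
    gaussianPDF (G0N *ᵥ x (Fin.last N)) Gc0 (x 0) *
    ∏ j : Fin (N - 1),
      gaussianPDF
        (Gkk1 (j.val + 1) *ᵥ x ⟨j.val, by have := j.isLt; omega⟩
          + GkN (j.val + 1) *ᵥ x (Fin.last N))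
        (Gc (j.val + 1)) (x ⟨j.val + 1, by have := j.isLt; omega⟩)


section PiIntegral

variable {ι ι' E : Type*} [Fintype ι] [Fintype ι'] [MeasureSpace E]
  [SigmaFinite (volume : Measure E)]

theorem integral_comp_arrowCongr (e : ι ≃ ι') (g : (ι' → E) → ℝ) :
    ∫ z : ι → E, g (fun i => z (e.symm i)) = ∫ w : ι' → E, g w :=
  (volume_preserving_arrowCongr' e (.refl E) (.id volume)).integral_comp' g

theorem integral_mul_of_subtype_compl (q : ι → Prop) [DecidablePred q]
    (F : ({i // q i} → E) → ℝ) (G : ({i // ¬ q i} → E) → ℝ) :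
    ∫ y : ι → E, F (fun i => y i) * G (fun i => y i) = (∫ u, F u) * ∫ v, G v := by
  rw [← integral_prod_mul]
  exact (volume_preserving_piEquivPiSubtypeProd (fun _ => E) q).integral_comp'
    (g := fun z => F z.1 * G z.2)

end PiIntegral

theorem marg_mul_of_dependsOn {d N : ℕ} {f g : (Fin (N + 1) → Fin d → ℝ) → ℝ}
    {S U : Finset (Fin (N + 1))} (hSU : Disjoint S U)
    (hf : DependsOn f (↑U)ᶜ) (hg : DependsOn g ↑(S ∪ U)) (x : Fin (N + 1) → Fin d → ℝ) :
    marg (f * g) S x = marg f (S ∪ U) x * marg g Uᶜ x := by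
  let q : {i // i ∉ S} → Prop := fun i => i.1 ∉ U
  let eF : {i // i ∉ S ∪ U} ≃ {t // q t} :=
    { toFun := fun i => ⟨⟨i.1, fun h => i.2 (Finset.mem_union_left U h)⟩,
        fun h => i.2 (Finset.mem_union_right S h)⟩
      invFun := fun t => ⟨t.1.1, fun h => (Finset.mem_union.1 h).elim t.1.2 t.2⟩
      left_inv := fun _ => rfl
      right_inv := fun _ => rfl }
  let eG : {i // i ∉ Uᶜ} ≃ {t // ¬ q t} :=
    { toFun := fun i => ⟨⟨i.1, Finset.disjoint_right.1 hSU (by simpa using i.2)⟩,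
        by simpa [q] using i.2⟩
      invFun := fun t => ⟨t.1.1, by simpa [q] using t.2⟩
      left_inv := fun _ => rfl
      right_inv := fun _ => rfl }
  have hF (y : {i // i ∉ S} → Fin d → ℝ) :
      f (fun i => if h : i ∈ S then x i else y ⟨i, h⟩)
        = f (fun i => if h : i ∈ S ∪ U then x i else y (eF ⟨i, h⟩)) := by
    refine hf fun i hiU => ?_
    by_cases hiS : i ∈ S
    · simp [hiS]
    · have hiSU : i ∉ S ∪ U := by simpa [hiS] using hiU
      simp only [hiS, hiSU, dite_false]
      rfl
  have hG (y : {i // i ∉ S} → Fin d → ℝ) :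
      g (fun i => if h : i ∈ S then x i else y ⟨i, h⟩)
        = g (fun i => if h : i ∈ Uᶜ then x i else y (eG ⟨i, h⟩)) := by
    refine hg fun i hi => ?_
    by_cases hiS : i ∈ S
    · simp [hiS, Finset.disjoint_left.1 hSU hiS]
    · have hiU : i ∉ Uᶜ := by simpa [hiS] using hi
      simp only [hiS, hiU, dite_false]
      rfl
  calc marg (f * g) S x
      = ∫ y : {i // i ∉ S} → Fin d → ℝ,
          f (fun i => if h : i ∈ S ∪ U then x i else y (eF ⟨i, h⟩))
            * g (fun i => if h : i ∈ Uᶜ then x i else y (eG ⟨i, h⟩)) := by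
        simp only [marg, Pi.mul_apply, hF, hG]
    _ = (∫ u : {t // q t} → Fin d → ℝ,
          f (fun i => if h : i ∈ S ∪ U then x i else u (eF ⟨i, h⟩)))
        * ∫ v : {t // ¬ q t} → Fin d → ℝ,
          g (fun i => if h : i ∈ Uᶜ then x i else v (eG ⟨i, h⟩)) :=
        integral_mul_of_subtype_compl q
          (fun u => f (fun i => if h : i ∈ S ∪ U then x i else u (eF ⟨i, h⟩)))
          (fun v => g (fun i => if h : i ∈ Uᶜ then x i else v (eG ⟨i, h⟩)))
    _ = marg f (S ∪ U) x * marg g Uᶜ x :=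
        congrArg₂ (· * ·)
          (integral_comp_arrowCongr eF.symm
            fun w => f (fun i => if h : i ∈ S ∪ U then x i else w ⟨i, h⟩))
          (integral_comp_arrowCongr eG.symm
            fun w => g (fun i => if h : i ∈ Uᶜ then x i else w ⟨i, h⟩))

theorem isMarkov_of_forall_eq_mul {d N : ℕ} {p : (Fin (N + 1) → Fin d → ℝ) → ℝ}
    (hp : ∀ j, ∃ f g : (Fin (N + 1) → Fin d → ℝ) → ℝ,
      DependsOn f (Set.Iic j) ∧ DependsOn g (Set.Ici j) ∧ p = f * g) :
    IsMarkov p := by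
  intro j k hjk x
  obtain ⟨f, g, hf, hg, rfl⟩ := hp j
  have hsplit (S U : Finset (Fin (N + 1))) (hSU : ∀ i ∈ S, i ∉ U) (hU : ∀ i ∈ U, j < i)
      (hcover : ∀ i, j ≤ i → i ∈ S ∨ i ∈ U) :
      marg (f * g) S x = marg f (S ∪ U) x * marg g Uᶜ x :=
    marg_mul_of_dependsOn (Finset.disjoint_left.2 hSU)
      (hf.mono fun i hi hiU => (hU i hiU).not_ge hi)
      (hg.mono fun i hi => Finset.mem_union.2 (hcover i hi)) x
  rw [hsplit (insert k (Finset.Iic j)) (Finset.Ioi j \ {k}), hsplit {j} (Finset.Ioi j),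
    hsplit {j, k} (Finset.Ioi j \ {k}), hsplit (Finset.Iic j) (Finset.Ioi j),
    show insert k (Finset.Iic j) ∪ (Finset.Ioi j \ {k}) = Finset.Iic j ∪ Finset.Ioi j by
      ext i; grind,
    show {j, k} ∪ (Finset.Ioi j \ {k}) = {j} ∪ Finset.Ioi j by
      ext i; grind]
  · ring
  all_goals grind

theorem isMarkov_of_eq_mul_prod {d N : ℕ} {p : (Fin (N + 1) → Fin d → ℝ) → ℝ}
    (ψ : (Fin d → ℝ) → ℝ) (φ : Fin N → (Fin d → ℝ) → (Fin d → ℝ) → ℝ)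
    (hp : ∀ x, p x = ψ (x 0) * ∏ i, φ i (x i.castSucc) (x i.succ)) :
    IsMarkov p := by
  classical
  refine isMarkov_of_forall_eq_mul fun j =>
    ⟨fun x => ψ (x 0) * ∏ i with i.castSucc < j, φ i (x i.castSucc) (x i.succ),
      fun x => ∏ i with ¬ i.castSucc < j, φ i (x i.castSucc) (x i.succ), ?_, ?_, ?_⟩
  · intro x y hxy
    refine congrArg₂ (· * ·) (congrArg ψ (hxy 0 (Fin.zero_le j))) (Finset.prod_congr rfl ?_)
    intro i hi
    have hi : i.castSucc < j := (Finset.mem_filter.1 hi).2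
    rw [hxy _ hi.le, hxy _ (Fin.castSucc_lt_iff_succ_le.1 hi)]
  · intro x y hxy
    refine Finset.prod_congr rfl fun i hi => ?_
    have hi : j ≤ i.castSucc := not_lt.1 (Finset.mem_filter.1 hi).2
    rw [hxy _ hi, hxy _ (hi.trans (Fin.castSucc_le_succ i))]
  · funext x
    rw [hp, Pi.mul_apply, mul_assoc, Finset.prod_filter_mul_prod_filter_not]

theorem gaussianPDF_add_mean {ι : Type*} [Fintype ι] [DecidableEq ι] {S : Matrix ι ι ℝ}
    (hS : S.IsSymm) (m w v : ι → ℝ) :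
    gaussianPDF (m + w) S v = gaussianPDF m S v * Real.exp ((v - m) ⬝ᵥ S⁻¹ *ᵥ w)
      * Real.exp (-(1 / 2) * (w ⬝ᵥ S⁻¹ *ᵥ w)) := by
  have expand (u : ι → ℝ) : (u - w) ⬝ᵥ S⁻¹ *ᵥ (u - w)
      = u ⬝ᵥ S⁻¹ *ᵥ u - 2 * (u ⬝ᵥ S⁻¹ *ᵥ w) + w ⬝ᵥ S⁻¹ *ᵥ w := by
    have hsymm : w ⬝ᵥ S⁻¹ *ᵥ u = u ⬝ᵥ S⁻¹ *ᵥ w := by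
      rw [← dotProduct_transpose_mulVec, hS.inv.eq]
    simp only [mulVec_sub, dotProduct_sub, sub_dotProduct, hsymm]
    ring
  rw [_root_.gaussianPDF, _root_.gaussianPDF, mul_assoc, mul_assoc, ← Real.exp_add,
    ← Real.exp_add, show v - (m + w) = (v - m) - w by abel, expand]
  ring_nf

theorem sub_mulVec_dotProduct_mulVec {ι : Type*} [Fintype ι] (A C : Matrix ι ι ℝ)
    (u v w : ι → ℝ) :
    (v - A *ᵥ u) ⬝ᵥ C *ᵥ w = v ⬝ᵥ C *ᵥ w - u ⬝ᵥ (Aᵀ * C) *ᵥ w := by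
  rw [sub_dotProduct, ← mulVec_mulVec, dotProduct_transpose_mulVec, dotProduct_comm (C *ᵥ w)]

section CML

variable {d : ℕ} (G0N : Matrix (Fin d) (Fin d) ℝ) (Gkk1 GkN : ℕ → Matrix (Fin d) (Fin d) ℝ)
  (Gc0 GcN : Matrix (Fin d) (Fin d) ℝ) (Gc : ℕ → Matrix (Fin d) (Fin d) ℝ)

-- The equation for `x_k` contributes the cross term `x_k' (cmlCoupling k) x_N` to the log-density.
noncomputable def cmlCoupling (k : ℕ) : Matrix (Fin d) (Fin d) ℝ :=
  if k = 0 then Gc0⁻¹ * G0N else (Gc k)⁻¹ * GkN k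

-- The last transition also carries the telescoped cross term and every factor in `x_N` alone.
noncomputable def cmlTransition (M i : ℕ) (u v : Fin d → ℝ) : ℝ :=
  if i < M then gaussianPDF (Gkk1 (i + 1) *ᵥ u) (Gc (i + 1)) v
  else Real.exp (u ⬝ᵥ cmlCoupling G0N GkN Gc0 Gc M *ᵥ v) * gaussianPDF 0 GcN v
    * Real.exp (-(1 / 2) * ((G0N *ᵥ v) ⬝ᵥ Gc0⁻¹ *ᵥ (G0N *ᵥ v)))
    * ∏ k ∈ Finset.range M,
        Real.exp (-(1 / 2) * ((GkN (k + 1) *ᵥ v) ⬝ᵥ (Gc (k + 1))⁻¹ *ᵥ (GkN (k + 1) *ᵥ v)))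

theorem cmlDensity_eq_mul_prod {M : ℕ} (hGc0 : Gc0.IsSymm) (hGc : ∀ k < M, (Gc (k + 1)).IsSymm)
    (hcoupling : ∀ k < M,
      (Gkk1 (k + 1))ᵀ * cmlCoupling G0N GkN Gc0 Gc (k + 1) = cmlCoupling G0N GkN Gc0 Gc k)
    (x : Fin (M + 2) → Fin d → ℝ) :
    cmlDensity G0N Gkk1 GkN Gc0 GcN Gc x = gaussianPDF 0 Gc0 (x 0)
      * ∏ i : Fin (M + 1), cmlTransition G0N Gkk1 GkN Gc0 GcN Gc M i (x i.castSucc) (x i.succ) := by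
  let X : ℕ → Fin d → ℝ := fun n => if h : n < M + 2 then x ⟨n, h⟩ else 0
  have hX (i : Fin (M + 2)) : X i = x i := dif_pos i.isLt
  rw [cmlDensity, Fin.prod_univ_castSucc]
  simp only [← hX, Fin.val_last, Fin.val_castSucc, Fin.val_succ, Fin.val_zero]
  rw [Fin.prod_univ_eq_prod_range (fun k => gaussianPDF
      (Gkk1 (k + 1) *ᵥ X k + GkN (k + 1) *ᵥ X (M + 1)) (Gc (k + 1)) (X (k + 1))),
    Fin.prod_univ_eq_prod_range (fun k =>
      cmlTransition G0N Gkk1 GkN Gc0 GcN Gc M k (X k) (X (k + 1))), Nat.add_sub_cancel]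
  set xN := X (M + 1)
  let g : ℕ → ℝ := fun n => X n ⬝ᵥ cmlCoupling G0N GkN Gc0 Gc n *ᵥ xN
  let s : ℕ → ℝ := fun k =>
    Real.exp (-(1 / 2) * ((GkN (k + 1) *ᵥ xN) ⬝ᵥ (Gc (k + 1))⁻¹ *ᵥ (GkN (k + 1) *ᵥ xN)))
  have initial : gaussianPDF (G0N *ᵥ xN) Gc0 (X 0) = gaussianPDF 0 Gc0 (X 0) * Real.exp (g 0)
      * Real.exp (-(1 / 2) * ((G0N *ᵥ xN) ⬝ᵥ Gc0⁻¹ *ᵥ (G0N *ᵥ xN))) := by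
    simpa [g, cmlCoupling, mulVec_mulVec] using gaussianPDF_add_mean hGc0 0 (G0N *ᵥ xN) (X 0)
  have middle (k : ℕ) (hk : k < M) :
      gaussianPDF (Gkk1 (k + 1) *ᵥ X k + GkN (k + 1) *ᵥ xN) (Gc (k + 1)) (X (k + 1))
        = gaussianPDF (Gkk1 (k + 1) *ᵥ X k) (Gc (k + 1)) (X (k + 1)) * Real.exp (g (k + 1) - g k)
          * s k := by
    have cross : (X (k + 1) - Gkk1 (k + 1) *ᵥ X k) ⬝ᵥ (Gc (k + 1))⁻¹ *ᵥ (GkN (k + 1) *ᵥ xN)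
        = g (k + 1) - g k := by
      rw [mulVec_mulVec, sub_mulVec_dotProduct_mulVec]
      simp only [g]
      rw [← hcoupling k hk, cmlCoupling, if_neg k.succ_ne_zero]
    rw [gaussianPDF_add_mean (hGc k hk), cross]
  have telescope : Real.exp (g 0) * ∏ k ∈ Finset.range M, Real.exp (g (k + 1) - g k)
      = Real.exp (X M ⬝ᵥ cmlCoupling G0N GkN Gc0 Gc M *ᵥ xN) := by
    rw [← Real.exp_sum, ← Real.exp_add, Finset.sum_range_sub, add_sub_cancel]
  simp only [cmlTransition]
  rw [Finset.prod_congr rfl fun k hk => middle k (Finset.mem_range.1 hk),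
    Finset.prod_congr rfl fun k hk => if_pos (Finset.mem_range.1 hk),
    Finset.prod_mul_distrib, Finset.prod_mul_distrib, initial, ← telescope, if_neg (lt_irrefl M)]
  ring

theorem transpose_mul_cmlCoupling_succ {N : ℕ}
    (hrec : ∀ k : ℕ, 1 ≤ k → k ≤ N - 2 →
      (Gc k)⁻¹ * GkN k = (Gkk1 (k + 1))ᵀ * (Gc (k + 1))⁻¹ * GkN (k + 1))
    (hmarkov : Gc0⁻¹ * G0N = (Gkk1 1)ᵀ * (Gc 1)⁻¹ * GkN 1) {k : ℕ} (hk : k + 2 ≤ N) :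
    (Gkk1 (k + 1))ᵀ * cmlCoupling G0N GkN Gc0 Gc (k + 1) = cmlCoupling G0N GkN Gc0 Gc k := by
  rcases k with _ | k
  · simp only [cmlCoupling, zero_add, one_ne_zero, ↓reduceIte, hmarkov, Matrix.mul_assoc]
  · simp only [cmlCoupling, Nat.succ_ne_zero, ↓reduceIte, hrec (k + 1) (by omega) (by omega),
      Matrix.mul_assoc]

end CML

theorem cml_model_markov_condition_general {d N : ℕ} (G0N : Matrix (Fin d) (Fin d) ℝ)
    (Gkk1 GkN : ℕ → Matrix (Fin d) (Fin d) ℝ)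
    (Gc0 GcN : Matrix (Fin d) (Fin d) ℝ) (Gc : ℕ → Matrix (Fin d) (Fin d) ℝ)
    (hGc0 : Gc0.PosDef) (hGc : ∀ k, (Gc k).PosDef)
    (hrec : ∀ k : ℕ, 1 ≤ k → k ≤ N - 2 →
      (Gc k)⁻¹ * GkN k = (Gkk1 (k + 1))ᵀ * (Gc (k + 1))⁻¹ * GkN (k + 1))
    (hmarkov : Gc0⁻¹ * G0N = (Gkk1 1)ᵀ * (Gc 1)⁻¹ * GkN 1) :
    IsMarkov (cmlDensity (N := N) G0N Gkk1 GkN Gc0 GcN Gc) := by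
  cases N with
  | zero => exact fun j k hjk => (hjk.ne (Fin.ext (by omega))).elim
  | succ M =>
    exact isMarkov_of_eq_mul_prod _ _ <| cmlDensity_eq_mul_prod G0N Gkk1 GkN Gc0 GcN Gc
      (isHermitian_iff_isSymm.1 hGc0.isHermitian)
      (fun k _ => isHermitian_iff_isSymm.1 (hGc (k + 1)).isHermitian)
      (fun k hk => transpose_mul_cmlCoupling_succ G0N Gkk1 GkN Gc0 Gc hrec hmarkov (by omega))

/-- If the $CM_L$ model parameters satisfy the reciprocal condition
$G_k^{-1}G_{k,N} = G_{k+1,k}'G_{k+1}^{-1}G_{k+1,N}$ for $k ∈ [1,N-2]$ and additionally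
$G_0^{-1}G_{0,N} = G_{1,0}'G_1^{-1}G_{1,N}$, then the governed sequence is Markov. -/
theorem cml_model_markov_condition {d N : ℕ} (G0N : Matrix (Fin d) (Fin d) ℝ)
    (Gkk1 GkN : ℕ → Matrix (Fin d) (Fin d) ℝ)
    (Gc0 GcN : Matrix (Fin d) (Fin d) ℝ) (Gc : ℕ → Matrix (Fin d) (Fin d) ℝ)
    (hGc0 : Gc0.PosDef) (hGcN : GcN.PosDef) (hGc : ∀ k, (Gc k).PosDef)
    (hrec : ∀ k : ℕ, 1 ≤ k → k ≤ N - 2 →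
      (Gc k)⁻¹ * GkN k = (Gkk1 (k + 1))ᵀ * (Gc (k + 1))⁻¹ * GkN (k + 1))
    (hmarkov : Gc0⁻¹ * G0N = (Gkk1 1)ᵀ * (Gc 1)⁻¹ * GkN 1) :
    IsMarkov (cmlDensity (N := N) G0N Gkk1 GkN Gc0 GcN Gc) :=
  cml_model_markov_condition_general G0N Gkk1 GkN Gc0 GcN Gc hGc0 hGc hrec hmarkov
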